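/- Let α, β ∈ ℂ, let I ⊆ ℝ∖{0} be an open interval, let u₁, u₂, v₁, v₂ : I → ℂ be differentiable functions satisfying the coupled Painlevé V system with parameters (α, β) on I, and let y : I → ℂ∖{0} be differentiable with s·y′(s)/y(s) = u₁(v₁−1)² + u₂(v₂−1)² + 2β on I. Define the 2×2 matrices A₀ = [[u₁v₁+u₂v₂−β, −(u₁v₁+u₂v₂−α−β)·y], [(u₁v₁+u₂v₂+α−β)/y, −(u₁v₁+u₂v₂)+β]], A₁ = [[−u₁v₁, u₁y], [−u₁v₁²/y, u₁v₁]], A₂ = [[−u₂v₂, u₂y], [−u₂v₂²/y, u₂v₂]], b₁ = −u₁(v₁−1) − u₂(v₂−1) + α + β, b₂ = −u₁v₁(v₁−1) − u₂v₂(v₂−1) + α − β, B = (1/s)·[[0, b₁y], [b₂/y, 0]], and set L(ζ, s) = (s/4)σ₃ + A₀(s)/ζ + A₁(s)/(ζ−1) + A₂(s)/(ζ+1) and U(ζ, s) = (ζ/4)σ₃ + B(s), where σ₃ = diag(1, −1). Then the zero-curvature (compatibility) equation ∂L/∂s − ∂U/∂ζ + L·U − U·L = 0 holds for all s ∈ I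 and all ζ ∈ ℂ∖{0, 1, −1}. -/

import Mathlib

open Complex Filter Topology MeasureTheory

/-- Right-hand side of the `u₁`-equation of the coupled Painlevé V system in
dimension four: `s·u₁′ = (s/2)u₁ − u₁²(v₁−1)(3v₁−1) − u₁u₂(v₂−1)(2v₁+v₂−1)
+ 2(α+β)u₁v₁ − 2βu₁`. -/
noncomputable def cpvRHSu₁ (α β s u₁ u₂ v₁ v₂ : ℂ) : ℂ :=
  (s / 2) * u₁ - u₁ ^ 2 * (v₁ - 1) * (3 * v₁ - 1)
    - u₁ * u₂ * (v₂ - 1) * (2 * v₁ + v₂ - 1) + 2 * (α + β) * u₁ * v₁ - 2 * β * u₁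

/-- Right-hand side of the `u₂`-equation of the coupled Painlevé V system. -/
noncomputable def cpvRHSu₂ (α β s u₁ u₂ v₁ v₂ : ℂ) : ℂ :=
  -(s / 2) * u₂ - u₂ ^ 2 * (v₂ - 1) * (3 * v₂ - 1)
    - u₁ * u₂ * (v₁ - 1) * (v₁ + 2 * v₂ - 1) + 2 * (α + β) * u₂ * v₂ - 2 * β * u₂

/-- Right-hand side of the `v₁`-equation of the coupled Painlevé V system. -/
noncomputable def cpvRHSv₁ (α β s u₁ u₂ v₁ v₂ : ℂ) : ℂ :=
  -(s / 2) * v₁ + 2 * u₁ * v₁ * (v₁ - 1) ^ 2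
    + u₂ * (v₁ + v₂) * (v₁ - 1) * (v₂ - 1) - α * (v₁ ^ 2 - 1) - β * (v₁ - 1) ^ 2

/-- Right-hand side of the `v₂`-equation of the coupled Painlevé V system. -/
noncomputable def cpvRHSv₂ (α β s u₁ u₂ v₁ v₂ : ℂ) : ℂ :=
  (s / 2) * v₂ + 2 * u₂ * v₂ * (v₂ - 1) ^ 2
    + u₁ * (v₁ + v₂) * (v₁ - 1) * (v₂ - 1) - α * (v₂ ^ 2 - 1) - β * (v₂ - 1) ^ 2

/-- `s·H` for the coupled Painlevé V system: `s·H = u₁²v₁(v₁−1)² + u₂²v₂(v₂−1)²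
− (s/2)(u₁v₁ − u₂v₂) − α(u₁(v₁²−1) + u₂(v₂²−1)) − β(u₁(v₁−1)² + u₂(v₂−1)²)
+ u₁u₂(v₁+v₂)(v₁−1)(v₂−1)`. -/
noncomputable def cpvSH (α β s u₁ u₂ v₁ v₂ : ℂ) : ℂ :=
  u₁ ^ 2 * v₁ * (v₁ - 1) ^ 2 + u₂ ^ 2 * v₂ * (v₂ - 1) ^ 2
    - (s / 2) * (u₁ * v₁ - u₂ * v₂)
    - α * (u₁ * (v₁ ^ 2 - 1) + u₂ * (v₂ ^ 2 - 1))
    - β * (u₁ * (v₁ - 1) ^ 2 + u₂ * (v₂ - 1) ^ 2)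
    + u₁ * u₂ * (v₁ + v₂) * (v₁ - 1) * (v₂ - 1)

/-- The Hamiltonian `H` of the coupled Painlevé V system, defined by `s·H = cpvSH`. -/
noncomputable def cpvH (α β s u₁ u₂ v₁ v₂ : ℂ) : ℂ := cpvSH α β s u₁ u₂ v₁ v₂ / s

/-- `(u₁, u₂, v₁, v₂)` is a solution of the coupled Painlevé V system in dimension
four with parameters `(α, β)` on a set `I ⊆ ℝ` of (nonzero) real values of `s`. -/
def IsCPVSolutionOn (α β : ℂ) (I : Set ℝ) (u₁ u₂ v₁ v₂ : ℝ → ℂ) : Prop :=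
  ∀ s ∈ I,
    DifferentiableAt ℝ u₁ s ∧ DifferentiableAt ℝ u₂ s ∧
    DifferentiableAt ℝ v₁ s ∧ DifferentiableAt ℝ v₂ s ∧
    (s : ℂ) * deriv u₁ s = cpvRHSu₁ α β s (u₁ s) (u₂ s) (v₁ s) (v₂ s) ∧
    (s : ℂ) * deriv u₂ s = cpvRHSu₂ α β s (u₁ s) (u₂ s) (v₁ s) (v₂ s) ∧
    (s : ℂ) * deriv v₁ s = cpvRHSv₁ α β s (u₁ s) (u₂ s) (v₁ s) (v₂ s) ∧
    (s : ℂ) * deriv v₂ s = cpvRHSv₂ α β s (u₁ s) (u₂ s) (v₁ s) (v₂ s)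

/-- `(u₁, u₂, v₁, v₂)`, as functions of `t > 0`, form a solution of the coupled
Painlevé V system with parameters `(α, β)` on the negative imaginary ray
`s = −it`, `t > 0`, where `d/ds` is interpreted as `i·d/dt`. -/
def IsCPVSolutionNegIm (α β : ℂ) (u₁ u₂ v₁ v₂ : ℝ → ℂ) : Prop :=
  ∀ t : ℝ, 0 < t →
    DifferentiableAt ℝ u₁ t ∧ DifferentiableAt ℝ u₂ t ∧
    DifferentiableAt ℝ v₁ t ∧ DifferentiableAt ℝ v₂ t ∧
    (-Complex.I * t) * (Complex.I * deriv u₁ t)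
      = cpvRHSu₁ α β (-Complex.I * t) (u₁ t) (u₂ t) (v₁ t) (v₂ t) ∧
    (-Complex.I * t) * (Complex.I * deriv u₂ t)
      = cpvRHSu₂ α β (-Complex.I * t) (u₁ t) (u₂ t) (v₁ t) (v₂ t) ∧
    (-Complex.I * t) * (Complex.I * deriv v₁ t)
      = cpvRHSv₁ α β (-Complex.I * t) (u₁ t) (u₂ t) (v₁ t) (v₂ t) ∧
    (-Complex.I * t) * (Complex.I * deriv v₂ t)
      = cpvRHSv₂ α β (-Complex.I * t) (u₁ t) (u₂ t) (v₁ t) (v₂ t)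

/-- The Pauli matrix `σ₃`. -/
noncomputable def pauliσ₃ : Matrix (Fin 2) (Fin 2) ℂ := !![1, 0; 0, -1]

/-- The residue matrix `A₀` of the Lax pair. -/
noncomputable def laxA₀ (α β u₁ u₂ v₁ v₂ y : ℂ) : Matrix (Fin 2) (Fin 2) ℂ :=
  !![u₁ * v₁ + u₂ * v₂ - β, -(u₁ * v₁ + u₂ * v₂ - α - β) * y;
     (u₁ * v₁ + u₂ * v₂ + α - β) / y, -(u₁ * v₁ + u₂ * v₂) + β]

/-- The residue matrices `A₁`, `A₂` of the Lax pair (with arguments `uₖ, vₖ, y`). -/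
noncomputable def laxA (u v y : ℂ) : Matrix (Fin 2) (Fin 2) ℂ :=
  !![-(u * v), u * y; -(u * v ^ 2) / y, u * v]

/-- `b₁ = −u₁(v₁−1) − u₂(v₂−1) + α + β`. -/
noncomputable def laxb₁ (α β u₁ u₂ v₁ v₂ : ℂ) : ℂ :=
  -(u₁ * (v₁ - 1)) - u₂ * (v₂ - 1) + α + β

/-- `b₂ = −u₁v₁(v₁−1) − u₂v₂(v₂−1) + α − β`. -/
noncomputable def laxb₂ (α β u₁ u₂ v₁ v₂ : ℂ) : ℂ :=
  -(u₁ * v₁ * (v₁ - 1)) - u₂ * v₂ * (v₂ - 1) + α - β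

/-- The matrix `B = (1/s)[[0, b₁y], [b₂/y, 0]]` of the Lax pair. -/
noncomputable def laxB (α β u₁ u₂ v₁ v₂ y s : ℂ) : Matrix (Fin 2) (Fin 2) ℂ :=
  (1 / s) • !![0, laxb₁ α β u₁ u₂ v₁ v₂ * y; laxb₂ α β u₁ u₂ v₁ v₂ / y, 0]

/-- `L(ζ, s) = (s/4)σ₃ + A₀/ζ + A₁/(ζ−1) + A₂/(ζ+1)`. -/
noncomputable def laxL (α β : ℂ) (u₁ u₂ v₁ v₂ y : ℝ → ℂ) (ζ : ℂ) (s : ℝ) :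
    Matrix (Fin 2) (Fin 2) ℂ :=
  ((s : ℂ) / 4) • pauliσ₃
    + ζ⁻¹ • laxA₀ α β (u₁ s) (u₂ s) (v₁ s) (v₂ s) (y s)
    + (ζ - 1)⁻¹ • laxA (u₁ s) (v₁ s) (y s)
    + (ζ + 1)⁻¹ • laxA (u₂ s) (v₂ s) (y s)

/-- `U(ζ, s) = (ζ/4)σ₃ + B(s)`. -/
noncomputable def laxU (α β : ℂ) (u₁ u₂ v₁ v₂ y : ℝ → ℂ) (ζ : ℂ) (s : ℝ) :
    Matrix (Fin 2) (Fin 2) ℂ :=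
  (ζ / 4) • pauliσ₃
    + laxB α β (u₁ s) (u₂ s) (v₁ s) (v₂ s) (y s) (s : ℂ)

/-!
Write `L = (s/4)σ₃ + Σₖ Aₖ/(ζ - aₖ)` with `(a₀, a₁, a₂) = (0, 1, -1)` and `U = (ζ/4)σ₃ + B`.
Since `ζ/(ζ - a) = 1 + a/(ζ - a)`, the curvature `∂L/∂s - ∂U/∂ζ + [L, U]` splits into partial
fractions: a part independent of `ζ`, `(s/4)[σ₃, B] + (1/4)[A₀ + A₁ + A₂, σ₃]`, which vanishes
identically, and simple poles with residues `Aₖ' + [Aₖ, (aₖ/4)σ₃ + B]`, which vanish by the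
Painlevé system together with the equation for `y`.
-/

open Matrix

theorem lie_partial_fractions {𝕜 R : Type*} [Field 𝕜] [Ring R] [Algebra 𝕜 R]
    {ζ : 𝕜} (hζ₀ : ζ ≠ 0) (hζ₁ : ζ - 1 ≠ 0) (hζ₂ : ζ + 1 ≠ 0) (s : 𝕜) (S A₀ A₁ A₂ B : R) :
    ⁅(s / 4) • S + ζ⁻¹ • A₀ + (ζ - 1)⁻¹ • A₁ + (ζ + 1)⁻¹ • A₂, (ζ / 4) • S + B⁆
      = (s / 4) • ⁅S, B⁆ + (1 / 4 : 𝕜) • ⁅A₀ + A₁ + A₂, S⁆ + ζ⁻¹ • ⁅A₀, B⁆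
        + (ζ - 1)⁻¹ • ⁅A₁, (1 / 4 : 𝕜) • S + B⁆ + (ζ + 1)⁻¹ • ⁅A₂, B - (1 / 4 : 𝕜) • S⁆ := by
  simp only [Ring.lie_def, add_mul, mul_add, sub_mul, mul_sub, smul_mul_assoc, mul_smul_comm,
    smul_sub, smul_add]
  match_scalars <;> field_simp <;> ring

theorem DifferentiableAt.hasDerivAt_div_of_mul_deriv_eq {𝕜 F : Type*}
    [NontriviallyNormedField 𝕜] [NormedField F] [NormedSpace 𝕜 F] {f : 𝕜 → F} {s : 𝕜} {c r : F}
    (hf : DifferentiableAt 𝕜 f s) (hc : c ≠ 0) (h : c * deriv f s = r) :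
    HasDerivAt f (r / c) s := by
  rw [← h, mul_div_cancel_left₀ _ hc]
  exact hf.hasDerivAt

noncomputable def laxADeriv (u v y u' v' y' : ℂ) : Matrix (Fin 2) (Fin 2) ℂ :=
  !![-(u' * v + u * v'), u' * y + u * y';
     -((u' * v ^ 2 + 2 * u * v * v') * y - u * v ^ 2 * y') / y ^ 2, u' * v + u * v']

/-- `laxA₀` depends on `(u₁, u₂, v₁, v₂)` only through `w = u₁v₁ + u₂v₂`; this is its derivative
in the direction `(w', y')`. -/
noncomputable def laxA₀Deriv (α β w y w' y' : ℂ) : Matrix (Fin 2) (Fin 2) ℂ :=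
  !![w', -(w' * y + (w - α - β) * y'); (w' * y - (w + α - β) * y') / y ^ 2, -w']

section Derivatives

variable {𝕜 : Type*} [NontriviallyNormedField 𝕜] [NormedAlgebra 𝕜 ℂ] {y : 𝕜 → ℂ} {y' : ℂ} {s : 𝕜}

theorem hasDerivAt_laxA_apply {u v : 𝕜 → ℂ} {u' v' : ℂ} (hu : HasDerivAt u u' s)
    (hv : HasDerivAt v v' s) (hy : HasDerivAt y y' s) (hy₀ : y s ≠ 0) (i j : Fin 2) :
    HasDerivAt (fun x ↦ laxA (u x) (v x) (y x) i j)
      (laxADeriv (u s) (v s) (y s) u' v' y' i j) s := by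
  fin_cases i <;> fin_cases j <;>
    simp only [laxA, laxADeriv, Fin.zero_eta, Fin.mk_one, Fin.isValue, of_apply, cons_val',
      cons_val_zero, cons_val_one, empty_val', cons_val_fin_one]
  · exact (hu.mul hv).neg.congr_deriv (by ring)
  · exact (hu.mul hy).congr_deriv (by ring)
  · exact ((hu.mul (hv.pow 2)).neg.div hy hy₀).congr_deriv
      (by simp only [Pi.neg_apply, Pi.mul_apply, Pi.pow_apply]; ring)
  · exact (hu.mul hv).congr_deriv (by ring)

variable {u₁ u₂ v₁ v₂ : 𝕜 → ℂ}

theorem hasDerivAt_laxA₀_apply {α β w' : ℂ}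
    (hw : HasDerivAt (fun x ↦ u₁ x * v₁ x + u₂ x * v₂ x) w' s)
    (hy : HasDerivAt y y' s) (hy₀ : y s ≠ 0) (i j : Fin 2) :
    HasDerivAt (fun x ↦ laxA₀ α β (u₁ x) (u₂ x) (v₁ x) (v₂ x) (y x) i j)
      (laxA₀Deriv α β (u₁ s * v₁ s + u₂ s * v₂ s) (y s) w' y' i j) s := by
  fin_cases i <;> fin_cases j <;>
    simp only [laxA₀, laxA₀Deriv, Fin.zero_eta, Fin.mk_one, Fin.isValue, of_apply, cons_val',
      cons_val_zero, cons_val_one, empty_val', cons_val_fin_one]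
  · exact hw.sub_const β
  · exact (((hw.sub_const α).sub_const β).neg.mul hy).congr_deriv
      (by simp only [Pi.neg_apply]; ring)
  · exact (((hw.add_const α).sub_const β).div hy hy₀).congr_deriv (by ring)
  · exact hw.neg.add_const β

end Derivatives

theorem hasDerivAt_laxL_apply {α β : ℂ} {u₁ u₂ v₁ v₂ y : ℝ → ℂ} {u₁' u₂' v₁' v₂' y' : ℂ} {s : ℝ}
    (ζ : ℂ) (hu₁ : HasDerivAt u₁ u₁' s) (hu₂ : HasDerivAt u₂ u₂' s) (hv₁ : HasDerivAt v₁ v₁' s)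
    (hv₂ : HasDerivAt v₂ v₂' s) (hy : HasDerivAt y y' s) (hy₀ : y s ≠ 0) (i j : Fin 2) :
    HasDerivAt (fun x ↦ laxL α β u₁ u₂ v₁ v₂ y ζ x i j)
      (((1 / 4 : ℂ) • pauliσ₃
        + ζ⁻¹ • laxA₀Deriv α β (u₁ s * v₁ s + u₂ s * v₂ s) (y s)
          (u₁' * v₁ s + u₁ s * v₁' + (u₂' * v₂ s + u₂ s * v₂')) y'
        + (ζ - 1)⁻¹ • laxADeriv (u₁ s) (v₁ s) (y s) u₁' v₁' y'
        + (ζ + 1)⁻¹ • laxADeriv (u₂ s) (v₂ s) (y s) u₂' v₂' y') i j) s := by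
  have hσ : HasDerivAt (fun x : ℝ ↦ (x : ℂ) / 4) (1 / 4) s := by
    simpa using (hasDerivAt_id s).ofReal_comp.div_const (4 : ℂ)
  simp only [laxL, Matrix.add_apply, Matrix.smul_apply, smul_eq_mul]
  exact (((hσ.mul_const _).add (((hasDerivAt_laxA₀_apply ((hu₁.mul hv₁).add (hu₂.mul hv₂))
    hy hy₀ i j).const_mul ζ⁻¹))).add ((hasDerivAt_laxA_apply hu₁ hv₁ hy hy₀ i j).const_mul _)).add
    ((hasDerivAt_laxA_apply hu₂ hv₂ hy hy₀ i j).const_mul _)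

section Residues

variable {α β s u₁ u₂ v₁ v₂ y : ℂ}

theorem laxCurvature_regular_part_eq_zero (hs : s ≠ 0) (hy : y ≠ 0) :
    (s / 4) • ⁅pauliσ₃, laxB α β u₁ u₂ v₁ v₂ y s⁆
      + (1 / 4 : ℂ) • ⁅laxA₀ α β u₁ u₂ v₁ v₂ y + laxA u₁ v₁ y + laxA u₂ v₂ y, pauliσ₃⁆ = 0 := by
  ext i j
  fin_cases i <;> fin_cases j <;>
    simp only [laxA₀, laxA, laxB, laxb₁, laxb₂, pauliσ₃,
      Ring.lie_def, Matrix.sub_apply, Matrix.add_apply, Matrix.smul_apply, Matrix.mul_apply,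
      Fin.sum_univ_two, Matrix.zero_apply, smul_eq_mul, Fin.zero_eta, Fin.mk_one, Fin.isValue,
      of_apply, cons_val', cons_val_zero, cons_val_one, empty_val', cons_val_fin_one] <;>
    field_simp <;> ring

theorem laxCurvature_residue_zero_eq_zero (hs : s ≠ 0) (hy : y ≠ 0) :
    laxA₀Deriv α β (u₁ * v₁ + u₂ * v₂) y
      (cpvRHSu₁ α β s u₁ u₂ v₁ v₂ / s * v₁ + u₁ * (cpvRHSv₁ α β s u₁ u₂ v₁ v₂ / s)
        + (cpvRHSu₂ α β s u₁ u₂ v₁ v₂ / s * v₂ + u₂ * (cpvRHSv₂ α β s u₁ u₂ v₁ v₂ / s)))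
      ((u₁ * (v₁ - 1) ^ 2 + u₂ * (v₂ - 1) ^ 2 + 2 * β) * y / s)
      + ⁅laxA₀ α β u₁ u₂ v₁ v₂ y, laxB α β u₁ u₂ v₁ v₂ y s⁆ = 0 := by
  ext i j
  fin_cases i <;> fin_cases j <;>
    simp only [laxA₀Deriv, laxA₀, laxB, laxb₁, laxb₂, cpvRHSu₁, cpvRHSv₁, cpvRHSu₂, cpvRHSv₂,
      Ring.lie_def, Matrix.sub_apply, Matrix.add_apply, Matrix.smul_apply, Matrix.mul_apply,
      Fin.sum_univ_two, Matrix.zero_apply, smul_eq_mul, Fin.zero_eta, Fin.mk_one, Fin.isValue,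
      of_apply, cons_val', cons_val_zero, cons_val_one, empty_val', cons_val_fin_one] <;>
    field_simp <;> ring

theorem laxCurvature_residue_one_eq_zero (hs : s ≠ 0) (hy : y ≠ 0) :
    laxADeriv u₁ v₁ y (cpvRHSu₁ α β s u₁ u₂ v₁ v₂ / s) (cpvRHSv₁ α β s u₁ u₂ v₁ v₂ / s)
      ((u₁ * (v₁ - 1) ^ 2 + u₂ * (v₂ - 1) ^ 2 + 2 * β) * y / s)
      + ⁅laxA u₁ v₁ y, (1 / 4 : ℂ) • pauliσ₃ + laxB α β u₁ u₂ v₁ v₂ y s⁆ = 0 := by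
  ext i j
  fin_cases i <;> fin_cases j <;>
    simp only [laxADeriv, laxA, laxB, laxb₁, laxb₂, pauliσ₃, cpvRHSu₁, cpvRHSv₁,
      Ring.lie_def, Matrix.sub_apply, Matrix.add_apply, Matrix.smul_apply, Matrix.mul_apply,
      Fin.sum_univ_two, Matrix.zero_apply, smul_eq_mul, Fin.zero_eta, Fin.mk_one, Fin.isValue,
      of_apply, cons_val', cons_val_zero, cons_val_one, empty_val', cons_val_fin_one] <;>
    field_simp <;> ring

theorem laxCurvature_residue_neg_one_eq_zero (hs : s ≠ 0) (hy : y ≠ 0) :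
    laxADeriv u₂ v₂ y (cpvRHSu₂ α β s u₁ u₂ v₁ v₂ / s) (cpvRHSv₂ α β s u₁ u₂ v₁ v₂ / s)
      ((u₁ * (v₁ - 1) ^ 2 + u₂ * (v₂ - 1) ^ 2 + 2 * β) * y / s)
      + ⁅laxA u₂ v₂ y, laxB α β u₁ u₂ v₁ v₂ y s - (1 / 4 : ℂ) • pauliσ₃⁆ = 0 := by
  ext i j
  fin_cases i <;> fin_cases j <;>
    simp only [laxADeriv, laxA, laxB, laxb₁, laxb₂, pauliσ₃, cpvRHSu₂, cpvRHSv₂,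
      Ring.lie_def, Matrix.sub_apply, Matrix.add_apply, Matrix.smul_apply, Matrix.mul_apply,
      Fin.sum_univ_two, Matrix.zero_apply, smul_eq_mul, Fin.zero_eta, Fin.mk_one, Fin.isValue,
      of_apply, cons_val', cons_val_zero, cons_val_one, empty_val', cons_val_fin_one] <;>
    field_simp <;> ring

end Residues

theorem cpv_zero_curvature
    (α β : ℂ) (I : Set ℝ)
    (hI0 : (0 : ℝ) ∉ I) (u₁ u₂ v₁ v₂ y : ℝ → ℂ)
    (hsol : IsCPVSolutionOn α β I u₁ u₂ v₁ v₂)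
    (hy : ∀ s ∈ I, y s ≠ 0 ∧ DifferentiableAt ℝ y s ∧
      (s : ℂ) * deriv y s / y s
        = u₁ s * (v₁ s - 1) ^ 2 + u₂ s * (v₂ s - 1) ^ 2 + 2 * β) :
    ∀ s ∈ I, ∀ ζ : ℂ, ζ ≠ 0 → ζ ≠ 1 → ζ ≠ -1 →
      ∃ L' : Matrix (Fin 2) (Fin 2) ℂ,
        (∀ i j : Fin 2,
          HasDerivAt (fun x : ℝ => laxL α β u₁ u₂ v₁ v₂ y ζ x i j) (L' i j) s) ∧
        L' - (1/4 : ℂ) • pauliσ₃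
          + laxL α β u₁ u₂ v₁ v₂ y ζ s * laxU α β u₁ u₂ v₁ v₂ y ζ s
          - laxU α β u₁ u₂ v₁ v₂ y ζ s * laxL α β u₁ u₂ v₁ v₂ y ζ s = 0 := by
  intro s hs ζ hζ₀ hζ₁ hζ₂
  obtain ⟨du₁, du₂, dv₁, dv₂, eu₁, eu₂, ev₁, ev₂⟩ := hsol s hs
  obtain ⟨hy₀, dy, ey⟩ := hy s hs
  rw [div_eq_iff hy₀] at ey
  have hs₀ : (s : ℂ) ≠ 0 := ofReal_ne_zero.2 (ne_of_mem_of_not_mem hs hI0)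
  refine ⟨_, hasDerivAt_laxL_apply ζ (du₁.hasDerivAt_div_of_mul_deriv_eq hs₀ eu₁)
    (du₂.hasDerivAt_div_of_mul_deriv_eq hs₀ eu₂) (dv₁.hasDerivAt_div_of_mul_deriv_eq hs₀ ev₁)
    (dv₂.hasDerivAt_div_of_mul_deriv_eq hs₀ ev₂) (dy.hasDerivAt_div_of_mul_deriv_eq hs₀ ey) hy₀,
    ?_⟩
  rw [add_sub_assoc, ← Ring.lie_def, laxL, laxU, lie_partial_fractions hζ₀ (sub_ne_zero.2 hζ₁)
    (fun h ↦ hζ₂ (eq_neg_of_add_eq_zero_left h))]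
  linear_combination (norm := module) laxCurvature_regular_part_eq_zero hs₀ hy₀
    + ζ⁻¹ • laxCurvature_residue_zero_eq_zero hs₀ hy₀
    + (ζ - 1)⁻¹ • laxCurvature_residue_one_eq_zero hs₀ hy₀
    + (ζ + 1)⁻¹ • laxCurvature_residue_neg_one_eq_zero hs₀ hy₀
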